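/- arXiv:1907.04814 — 2 statements merged into one kernel-verified Lean document; each statement's English description precedes it below -/
import Mathlib

section
/- Let d ≥ 2 be an integer, s > 0, and x₀ ∈ S^d. Then, as a function of x ∈ S^d with x ≠ x₀, the Riesz kernel satisfies (−Δ + (1/4)s(2d−2−s)) R_s(x, x₀) = s(d−2−s) R_{s+2}(x, x₀), where Δ is the Laplace–Beltrami operator on S^d acting in the variable x. -/
open MeasureTheory Metric Filter
open scoped ENNReal NNReal BigOperators Topology RealInnerProductSpace

noncomputable section

/-- The ambient Euclidean space `ℝ^{d+1}`. -/
abbrev Amb (d : ℕ) := EuclideanSpace ℝ (Fin (d + 1))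

/-- The unit sphere `S^d ⊂ ℝ^{d+1}`. -/
def unitSphere (d : ℕ) : Set (Amb d) := Metric.sphere (0 : Amb d) 1

/-- The surface measure `σ` on `S^d`, realized as the `d`-dimensional Hausdorff
measure restricted to the sphere. -/
def surfMeasure (d : ℕ) : Measure (Amb d) := (μH[(d : ℝ)]).restrict (unitSphere d)

/-- The spherical cap `D_r(z) = {y ∈ S^d : |z - y| < r}`. -/
def sphereCap (d : ℕ) (z : Amb d) (r : ℝ) : Set (Amb d) :=
  {y ∈ unitSphere d | dist z y < r}

/-- `ω_d = σ(S^d)`. -/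
def omega_d (d : ℕ) : ℝ := (surfMeasure d Set.univ).toReal

/-- The Riesz kernel `R_s(x,y) = |x-y|^{-s}` for `s > 0`, and
`R_0(x,y) = -log |x-y|`. -/
def rieszKernel {E : Type*} [PseudoMetricSpace E] (s : ℝ) (x y : E) : ℝ :=
  if s = 0 then -Real.log (dist x y) else (dist x y) ^ (-s)

/-- The discrete Riesz `s`-energy `E_s(X_N) = ∑_{i ≠ j} R_s(x_i, x_j)`. -/
def pairEnergy (d : ℕ) (s : ℝ) {N : ℕ} (x : Fin N → Amb d) : ℝ :=
  ∑ i, ∑ j, if i ≠ j then rieszKernel s (x i) (x j) else 0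

/-- `x : Fin N → S^d` minimizes the Riesz `s`-energy among all `N`-point subsets of `S^d`. -/
def IsEnergyMinimizer (d : ℕ) (s : ℝ) {N : ℕ} (x : Fin N → Amb d) : Prop :=
  (∀ i, x i ∈ unitSphere d) ∧
    ∀ y : Fin N → Amb d, (∀ i, y i ∈ unitSphere d) → pairEnergy d s x ≤ pairEnergy d s y

/-- Radial projection `π(y) = y/|y|` onto the sphere. -/
def sphProj (d : ℕ) (y : Amb d) : Amb d := ‖y‖⁻¹ • y

/-- The Euclidean Laplacian `Δ_{ℝ^n} f = ∑ ∂²f/∂x_i²`. -/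
def euclLaplacian {n : ℕ} (f : EuclideanSpace ℝ (Fin n) → ℝ)
    (x : EuclideanSpace ℝ (Fin n)) : ℝ :=
  ∑ i : Fin n, iteratedFDeriv ℝ 2 f x ![EuclideanSpace.single i 1, EuclideanSpace.single i 1]

/-- The Laplace–Beltrami operator on `S^d`:
`Δ f (x) = Δ_{ℝ^{d+1}} (f ∘ π) (x)` for `x ∈ S^d`, where `π(y) = y/|y|`. -/
def sphLaplacian (d : ℕ) (f : Amb d → ℝ) (x : Amb d) : ℝ :=
  euclLaplacian (fun y => f (sphProj d y)) x

/-- The spherical (tangential) gradient on `S^d`: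
`∇ f (x) = ∇_{ℝ^{d+1}} (f ∘ π) (x)` for `x ∈ S^d`. -/
def sphGrad (d : ℕ) (f : Amb d → ℝ) (x : Amb d) : Amb d :=
  gradient (fun y => f (sphProj d y)) x

/-- A function on the sphere is smooth if its radial extension is `C^∞` away from the origin. -/
def SmoothOnSphere (d : ℕ) (f : Amb d → ℝ) : Prop :=
  ContDiffOn ℝ (⊤ : ℕ∞) (fun y => f (sphProj d y)) {(0 : Amb d)}ᶜ

/-! ### Auxiliary machinery for differentiating the radial extension of the Riesz kernel -/

/-- The real inner product as a continuous bilinear map. -/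
def J (d : ℕ) : Amb d →L[ℝ] Amb d →L[ℝ] ℝ :=
  (isBoundedBilinearMap_inner (𝕜 := ℝ) (E := Amb d)).toContinuousLinearMap

@[simp] lemma J_apply {d : ℕ} (y v : Amb d) : J d y v = ⟪y, v⟫ := rfl

lemma hasFDerivAt_rself {d : ℕ} (y : Amb d) :
    HasFDerivAt (fun z : Amb d => (⟪z, z⟫ : ℝ)) ((2:ℝ) • J d y) y := by
  have h := (hasFDerivAt_id y).inner ℝ (hasFDerivAt_id y)
  refine h.congr_fderiv ?_
  ext v
  simp [fderivInnerCLM_apply, real_inner_comm, two_mul]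

/-- `wF a y = |π(y) - a|²` as an explicit smooth formula. -/
def wF {d : ℕ} (a : Amb d) (y : Amb d) : ℝ := 2 - 2 * (⟪a, y⟫ * (⟪y, y⟫ : ℝ) ^ (-(1:ℝ)/2))

/-- First derivative of `wF`. -/
def WD {d : ℕ} (a y : Amb d) : Amb d →L[ℝ] ℝ :=
  (-2 * (⟪y, y⟫:ℝ) ^ (-(1:ℝ)/2)) • J d a
    + (2 * ⟪a, y⟫ * (⟪y, y⟫:ℝ) ^ (-(3:ℝ)/2)) • J d y

lemma hasFDerivAt_wF {d : ℕ} (a y : Amb d) (hy : (⟪y, y⟫:ℝ) ≠ 0) :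
    HasFDerivAt (wF a) (WD a y) y := by
  have hr := hasFDerivAt_rself y
  have h1 : HasFDerivAt (fun z : Amb d => (⟪z, z⟫ : ℝ) ^ (-(1:ℝ)/2))
      (((-(1:ℝ)/2) * (⟪y, y⟫:ℝ) ^ (-(1:ℝ)/2 - 1)) • ((2:ℝ) • J d y)) y :=
    hr.rpow_const (Or.inl hy)
  have h2 : HasFDerivAt (fun z : Amb d => (⟪a, z⟫ : ℝ)) (J d a) y :=
    (J d a).hasFDerivAt
  have h3 := ((h2.mul h1).const_mul (2:ℝ)).const_sub 2
  refine h3.congr_fderiv ?_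
  ext v
  have he : (-(1:ℝ)/2 - 1) = -(3:ℝ)/2 := by norm_num
  simp only [he, WD, ContinuousLinearMap.coe_smul', ContinuousLinearMap.coe_sub',
    ContinuousLinearMap.add_apply, ContinuousLinearMap.smul_apply, J_apply,
    Pi.smul_apply, smul_eq_mul, ContinuousLinearMap.coe_add', Pi.add_apply,
    Pi.sub_apply, ContinuousLinearMap.neg_apply, Pi.neg_apply]
  ring

/-- Second derivative of `wF` at a point of the unit sphere. -/
def MD {d : ℕ} (a x : Amb d) : Amb d →L[ℝ] (Amb d →L[ℝ] ℝ) :=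
  (((2:ℝ) • J d x).smulRight (J d a)
    + (((2:ℝ) • J d a + (-(6:ℝ) * ⟪a, x⟫) • J d x)).smulRight (J d x))
    + (2 * ⟪a, x⟫) • J d

lemma hasFDerivAt_WD {d : ℕ} (a x : Amb d) (hx : (⟪x, x⟫:ℝ) = 1) :
    HasFDerivAt (WD a) (MD a x) x := by
  have hx0 : (⟪x, x⟫:ℝ) ≠ 0 := by rw [hx]; norm_num
  have hr := hasFDerivAt_rself x
  have hα₁ : HasFDerivAt (fun z : Amb d => -2 * (⟪z, z⟫:ℝ) ^ (-(1:ℝ)/2))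
      ((-2 : ℝ) • (((-(1:ℝ)/2) * (⟪x, x⟫:ℝ) ^ (-(1:ℝ)/2 - 1)) • ((2:ℝ) • J d x))) x :=
    (hr.rpow_const (Or.inl hx0)).const_mul (-2)
  have h1 := hα₁.smul (hasFDerivAt_const (J d a) x)
  have hα₂ : HasFDerivAt (fun z : Amb d => 2 * ⟪a, z⟫ * (⟪z, z⟫:ℝ) ^ (-(3:ℝ)/2))
      ((2 * ⟪a, x⟫) • (((-(3:ℝ)/2) * (⟪x, x⟫:ℝ) ^ (-(3:ℝ)/2 - 1)) • ((2:ℝ) • J d x))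
        + ((⟪x, x⟫:ℝ) ^ (-(3:ℝ)/2)) • ((2:ℝ) • J d a)) x := by
    have hb : HasFDerivAt (fun z : Amb d => 2 * ⟪a, z⟫) ((2:ℝ) • J d a) x :=
      (J d a).hasFDerivAt.const_mul (2:ℝ)
    exact hb.mul (hr.rpow_const (Or.inl hx0))
  have h2 := hα₂.smul (J d).hasFDerivAt
  have h3 := h1.add h2
  refine h3.congr_fderiv ?_
  ext v u
  simp only [hx, Real.one_rpow, MD, ContinuousLinearMap.add_apply,
    ContinuousLinearMap.smul_apply, ContinuousLinearMap.smulRight_apply, J_apply,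
    ContinuousLinearMap.zero_apply, smul_eq_mul, ContinuousLinearMap.coe_smul', Pi.smul_apply,
    ContinuousLinearMap.coe_add', Pi.add_apply]
  ring

/-- The radial extension `gF s a y = wF a y ^ (-s/2)` of the Riesz kernel. -/
def gF {d : ℕ} (s : ℝ) (a : Amb d) (y : Amb d) : ℝ := wF a y ^ (-s/2)

/-- First derivative of `gF`. -/
def GD {d : ℕ} (s : ℝ) (a y : Amb d) : Amb d →L[ℝ] ℝ :=
  ((-s/2) * wF a y ^ (-s/2 - 1)) • WD a y

lemma hasFDerivAt_gF {d : ℕ} (s : ℝ) (a y : Amb d) (hy : (⟪y, y⟫:ℝ) ≠ 0)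
    (hw : wF a y ≠ 0) : HasFDerivAt (gF s a) (GD s a y) y :=
  (hasFDerivAt_wF a y hy).rpow_const (Or.inl hw)

/-- Second derivative of `gF` at a point of the unit sphere. -/
def HD {d : ℕ} (s : ℝ) (a x : Amb d) : Amb d →L[ℝ] (Amb d →L[ℝ] ℝ) :=
  ((-s/2) * wF a x ^ (-s/2 - 1)) • MD a x
    + ((-s/2 : ℝ) • (((-s/2 - 1) * wF a x ^ (-s/2 - 1 - 1)) • WD a x)).smulRight (WD a x)

lemma hasFDerivAt_GD {d : ℕ} (s : ℝ) (a x : Amb d) (hx : (⟪x, x⟫:ℝ) = 1)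
    (hw : wF a x ≠ 0) : HasFDerivAt (GD s a) (HD s a x) x := by
  have hx0 : (⟪x, x⟫:ℝ) ≠ 0 := by rw [hx]; norm_num
  have hK : HasFDerivAt (fun y : Amb d => (-s/2) * wF a y ^ (-s/2 - 1))
      ((-s/2 : ℝ) • (((-s/2 - 1) * wF a x ^ (-s/2 - 1 - 1)) • WD a x)) x :=
    ((hasFDerivAt_wF a x hx0).rpow_const (Or.inl hw)).const_mul (-s/2)
  exact hK.smul (hasFDerivAt_WD a x hx)

/-- **Laplace–Beltrami of the Riesz kernel.**
For `d ≥ 2`, `s > 0` and `x₀ ∈ S^d`, at every `x ∈ S^d` with `x ≠ x₀`,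
`(-Δ + (1/4)s(2d-2-s)) R_s(x,x₀) = s(d-2-s) R_{s+2}(x,x₀)`. -/
theorem laplacian_of_riesz_kernel
    (d : ℕ) (hd : 2 ≤ d) (s : ℝ) (hs : 0 < s)
    (x₀ : Amb d) (hx₀ : x₀ ∈ unitSphere d)
    (x : Amb d) (hx : x ∈ unitSphere d) (hne : x ≠ x₀) :
    -sphLaplacian d (fun y => rieszKernel s y x₀) x
        + 1 / 4 * s * (2 * d - 2 - s) * rieszKernel s x x₀ =
      s * ((d : ℝ) - 2 - s) * rieszKernel (s + 2) x x₀ := by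
  have hsne : s ≠ 0 := ne_of_gt hs
  have han : ‖x₀‖ = 1 := by simpa [unitSphere, mem_sphere_zero_iff_norm] using hx₀
  have hxn : ‖x‖ = 1 := by simpa [unitSphere, mem_sphere_zero_iff_norm] using hx
  have haa : (⟪x₀, x₀⟫:ℝ) = 1 := by rw [real_inner_self_eq_norm_sq, han]; norm_num
  have hxxi : (⟪x, x⟫:ℝ) = 1 := by rw [real_inner_self_eq_norm_sq, hxn]; norm_num
  have hd2 : ‖x - x₀‖ ^ 2 = 2 - 2 * ⟪x₀, x⟫ := by
    rw [norm_sub_sq_real, hxn, han, real_inner_comm]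
    ring
  set u : ℝ := ⟪x₀, x⟫ with hu_def
  have hdpos : (0:ℝ) < ‖x - x₀‖ := by
    rw [norm_pos_iff]
    exact sub_ne_zero.mpr hne
  have hwx : wF x₀ x = 2 - 2 * u := by
    rw [hu_def]
    simp only [wF, hxxi, Real.one_rpow, mul_one]
  have hwpos : 0 < wF x₀ x := by
    rw [hwx, ← hd2]
    positivity
  have hwne : wF x₀ x ≠ 0 := ne_of_gt hwpos
  have hu1 : (2:ℝ) - 2*u ≠ 0 := by rw [← hwx]; exact hwne
  -- Riesz kernel values at x
  have hpow : ∀ t : ℝ, 0 ≤ t → ∀ p : ℝ, t ^ (-p) = (t ^ 2) ^ (-p/2) := by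
    intro t ht p
    rw [← Real.rpow_two, ← Real.rpow_mul ht]
    congr 1
    ring
  have hRs : rieszKernel s x x₀ = (2 - 2*u) ^ (-s/2) := by
    rw [rieszKernel, if_neg hsne, dist_eq_norm, hpow _ (norm_nonneg _), hd2]
  have hRs2 : rieszKernel (s+2) x x₀ = (2 - 2*u) ^ (-s/2) / (2 - 2*u) := by
    rw [rieszKernel, if_neg (by positivity), dist_eq_norm, hpow _ (norm_nonneg _), hd2,
      show (-(s+2)/2 : ℝ) = -s/2 - 1 by ring, Real.rpow_sub_one hu1]
  -- the radial extension agrees with gF away from 0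
  have hGg : ∀ y : Amb d, (0:ℝ) < ⟪y, y⟫ → rieszKernel s (sphProj d y) x₀ = gF s x₀ y := by
    intro y hy
    have hy0 : y ≠ 0 := by
      intro h; rw [h] at hy; simp at hy
    have hny : ‖y‖ ≠ 0 := norm_ne_zero_iff.mpr hy0
    have hinv : (⟪y, y⟫:ℝ) ^ (-(1:ℝ)/2) = ‖y‖⁻¹ := by
      rw [real_inner_self_eq_norm_sq, ← Real.rpow_two,
        ← Real.rpow_mul (norm_nonneg y)]
      norm_num
      exact (Real.rpow_neg_one ‖y‖)
    have hnp : ‖sphProj d y‖ = 1 := by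
      rw [sphProj, norm_smul, norm_inv, norm_norm, inv_mul_cancel₀ hny]
    have hip : (⟪sphProj d y, x₀⟫:ℝ) = ⟪x₀, y⟫ * ‖y‖⁻¹ := by
      rw [sphProj, real_inner_smul_left, real_inner_comm]
      ring
    have hsq : ‖sphProj d y - x₀‖ ^ 2 = wF x₀ y := by
      rw [norm_sub_sq_real, hnp, han, hip, wF, hinv]
      ring
    rw [rieszKernel, if_neg hsne, dist_eq_norm, hpow _ (norm_nonneg _), hsq, gF]
  -- the open set on which everything is smooth
  have hconr : Continuous (fun y : Amb d => (⟪y, y⟫:ℝ)) := continuous_id.inner continuous_id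
  have hopen1 : IsOpen {y : Amb d | (0:ℝ) < ⟪y, y⟫} := isOpen_lt continuous_const hconr
  have hcontw : ContinuousOn (wF x₀) {y : Amb d | (0:ℝ) < ⟪y, y⟫} := by
    refine continuousOn_const.sub (continuousOn_const.mul ?_)
    exact ((continuous_const.inner continuous_id).continuousOn).mul
      (hconr.continuousOn.rpow_const (fun y hy => Or.inl (ne_of_gt hy)))
  set U : Set (Amb d) := {y : Amb d | (0:ℝ) < ⟪y, y⟫} ∩ (wF x₀) ⁻¹' (Set.Ioi 0) with hU_def
  have hUopen : IsOpen U := hcontw.isOpen_inter_preimage hopen1 isOpen_Ioi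
  have hxU : x ∈ U := ⟨by show (0:ℝ) < ⟪x, x⟫; rw [hxxi]; norm_num,
    by simpa [Set.mem_preimage] using hwpos⟩
  have hUnhds : U ∈ 𝓝 x := hUopen.mem_nhds hxU
  -- first derivative of the radial extension near x
  have hfdG : fderiv ℝ (fun y => rieszKernel s (sphProj d y) x₀) =ᶠ[𝓝 x] GD s x₀ := by
    refine Filter.eventually_of_mem hUnhds fun y hy => ?_
    have h1 : (fun y => rieszKernel s (sphProj d y) x₀) =ᶠ[𝓝 y] gF s x₀ :=
      Filter.eventually_of_mem (hopen1.mem_nhds hy.1) hGg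
    rw [h1.fderiv_eq]
    exact (hasFDerivAt_gF s x₀ y (ne_of_gt hy.1) (ne_of_gt hy.2)).fderiv
  have hsecond : fderiv ℝ (fderiv ℝ (fun y => rieszKernel s (sphProj d y) x₀)) x = HD s x₀ x := by
    rw [hfdG.fderiv_eq]
    exact (hasFDerivAt_GD s x₀ x hxxi hwne).fderiv
  -- abbreviations for the coefficients
  set K : ℝ := (-s/2) * (2 - 2*u) ^ (-s/2 - 1) with hK_def
  set P : ℝ := (-s/2) * ((-s/2 - 1) * (2 - 2*u) ^ (-s/2 - 1 - 1)) with hP_def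
  -- pointwise formula for the second derivative
  have hterm : ∀ v : Amb d, HD s x₀ x v v =
      (4*P) * (⟪x₀, v⟫ * ⟪x₀, v⟫) + (4*K - 8*u*P) * (⟪x₀, v⟫ * ⟪x, v⟫)
        + (-6*u*K + 4*u^2*P) * (⟪x, v⟫ * ⟪x, v⟫) + (2*u*K) * ⟪v, v⟫ := by
    intro v
    simp only [HD, MD, WD, hwx, hxxi, Real.one_rpow, hK_def, hP_def,
      ContinuousLinearMap.add_apply, ContinuousLinearMap.smul_apply,
      ContinuousLinearMap.smulRight_apply, J_apply, smul_eq_mul]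
    ring
  -- summation over the standard basis
  have hip2 : ∀ p q : Amb d,
      ∑ i, (⟪p, EuclideanSpace.single i (1:ℝ)⟫ * ⟪q, EuclideanSpace.single i (1:ℝ)⟫ : ℝ)
        = ⟪p, q⟫ := by
    intro p q
    simp [EuclideanSpace.inner_single_right, PiLp.inner_apply, RCLike.inner_apply,
      starRingEnd_apply]
    exact Finset.sum_congr rfl fun i _ => mul_comm _ _
  have hself : ∀ i : Fin (d+1),
      (⟪(EuclideanSpace.single i (1:ℝ) : Amb d), EuclideanSpace.single i (1:ℝ)⟫ : ℝ) = 1 := by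
    intro i
    simp [EuclideanSpace.inner_single_right, EuclideanSpace.single_apply]
  -- Laplacian value
  have hLap : sphLaplacian d (fun y => rieszKernel s y x₀) x
      = (4*P) * 1 + (4*K - 8*u*P) * u + (-6*u*K + 4*u^2*P) * 1 + (2*u*K) * (d+1) := by
    rw [sphLaplacian, euclLaplacian]
    have hterm2 : ∀ i : Fin (d+1),
        iteratedFDeriv ℝ 2 (fun y => rieszKernel s (sphProj d y) x₀) x
          ![EuclideanSpace.single i 1, EuclideanSpace.single i 1]
        = HD s x₀ x (EuclideanSpace.single i 1) (EuclideanSpace.single i 1) := by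
      intro i
      rw [iteratedFDeriv_two_apply, hsecond]
      simp
    calc ∑ i : Fin (d+1), iteratedFDeriv ℝ 2 (fun y => rieszKernel s (sphProj d y) x₀) x
          ![EuclideanSpace.single i 1, EuclideanSpace.single i 1]
        = ∑ i : Fin (d+1), HD s x₀ x (EuclideanSpace.single i 1) (EuclideanSpace.single i 1) :=
          Finset.sum_congr rfl fun i _ => hterm2 i
      _ = ∑ i : Fin (d+1),
            ((4*P) * (⟪x₀, EuclideanSpace.single i (1:ℝ)⟫ * ⟪x₀, EuclideanSpace.single i (1:ℝ)⟫)
            + (4*K - 8*u*P) * (⟪x₀, EuclideanSpace.single i (1:ℝ)⟫ * ⟪x, EuclideanSpace.single i (1:ℝ)⟫)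
            + (-6*u*K + 4*u^2*P) * (⟪x, EuclideanSpace.single i (1:ℝ)⟫ * ⟪x, EuclideanSpace.single i (1:ℝ)⟫)
            + (2*u*K) * ⟪EuclideanSpace.single i (1:ℝ), EuclideanSpace.single i (1:ℝ)⟫) :=
          Finset.sum_congr rfl fun i _ => hterm _
      _ = (4*P) * 1 + (4*K - 8*u*P) * u + (-6*u*K + 4*u^2*P) * 1 + (2*u*K) * (d+1) := by
          simp only [Finset.sum_add_distrib, ← Finset.mul_sum]
          rw [hip2 x₀ x₀, hip2 x₀ x, hip2 x x, haa, hxxi]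
          simp only [hself]
          rw [Finset.sum_const, Finset.card_univ, Fintype.card_fin]
          push_cast
          ring
  -- final algebra
  rw [hLap, hRs, hRs2, hK_def, hP_def,
    show (-s/2 - 1 - 1 : ℝ) = (-s/2 - 1) - 1 by ring, Real.rpow_sub_one hu1,
    Real.rpow_sub_one hu1]
  have hu2 : (1:ℝ) - u ≠ 0 := by intro h; apply hu1; linarith
  field_simp [hu2]
  ring
end
end

section
/- Let d > 2 be an integer and x₀ ∈ S^d. Then, as a function of x ∈ S^d with x ≠ x₀, the logarithmic kernel satisfies −Δ R_0(x, x₀) = (d−2) R_2(x, x₀) − (d−1)/2, where Δ is the Laplace–Beltrami operator on S^d acting in the variable x. -/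
open MeasureTheory Metric Filter
open scoped ENNReal NNReal BigOperators Topology RealInnerProductSpace

noncomputable section

section AuxDeriv
variable {F : Type*} [NormedAddCommGroup F] [InnerProductSpace ℝ F]


lemma aux_hasFDerivAt_norm (y : F) (hy : y ≠ 0) :
    HasFDerivAt (fun z : F => ‖z‖) (‖y‖⁻¹ • innerSL ℝ y) y := by
  have h2 : HasFDerivAt (fun z : F => ‖z‖ ^ 2) (2 • innerSL ℝ y) y :=
    (hasStrictFDerivAt_norm_sq y).hasFDerivAt
  have hne : ‖y‖ ^ 2 ≠ 0 := pow_ne_zero 2 (norm_ne_zero_iff.2 hy)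
  have h3 := (Real.hasDerivAt_sqrt hne).comp_hasFDerivAt y h2
  have heq : (fun z : F => Real.sqrt (‖z‖ ^ 2)) = fun z : F => ‖z‖ := by
    funext z; exact Real.sqrt_sq (norm_nonneg z)
  rw [Function.comp_def, heq] at h3
  refine h3.congr_fderiv ?_
  rw [Real.sqrt_sq (norm_nonneg y)]
  ext w
  simp [smul_smul]
  field_simp

lemma aux_hasFDerivAt_inner (x₀ y : F) :
    HasFDerivAt (fun z : F => ⟪x₀, z⟫) (innerSL ℝ x₀) y :=
  (innerSL ℝ x₀).hasFDerivAt

lemma aux_hasFDerivAt_invnorm (y : F) (hy : y ≠ 0) :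
    HasFDerivAt (fun z : F => ‖z‖⁻¹)
      ((-(‖y‖ ^ 2)⁻¹) • (‖y‖⁻¹ • innerSL ℝ y)) y :=
  (hasDerivAt_inv (norm_ne_zero_iff.2 hy)).comp_hasFDerivAt y (aux_hasFDerivAt_norm y hy)

lemma aux_hasFDerivAt_A (x₀ y : F) (hy : y ≠ 0) :
    HasFDerivAt (fun z : F => 2 - 2 * (⟪x₀, z⟫ * ‖z‖⁻¹))
      (-((2:ℝ) • (⟪x₀, y⟫ • ((-(‖y‖ ^ 2)⁻¹) • (‖y‖⁻¹ • innerSL ℝ y)) + ‖y‖⁻¹ • innerSL ℝ x₀))) y :=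
  (((aux_hasFDerivAt_inner x₀ y).mul (aux_hasFDerivAt_invnorm y hy)).const_mul 2).const_sub 2

lemma fderiv_G_eq (x₀ y : F) (hy : y ≠ 0) (hA : 2 - 2 * (⟪x₀, y⟫ * ‖y‖⁻¹) ≠ 0) (v : F) :
    fderiv ℝ (fun z : F => Real.log (2 - 2 * (⟪x₀, z⟫ * ‖z‖⁻¹)) * (-1/2)) y v
      = (⟪x₀, v⟫ * ‖y‖⁻¹ - ⟪x₀, y⟫ * ⟪v, y⟫ * ‖y‖⁻¹ ^ 3) / (2 - 2 * (⟪x₀, y⟫ * ‖y‖⁻¹)) := by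
  have hG := ((Real.hasDerivAt_log hA).comp_hasFDerivAt y (aux_hasFDerivAt_A x₀ y hy)).mul_const (-1/2 : ℝ)
  simp only [Function.comp_def] at hG
  rw [hG.fderiv]
  have hn : ‖y‖ ≠ 0 := norm_ne_zero_iff.2 hy
  simp only [ContinuousLinearMap.add_apply, ContinuousLinearMap.smul_apply,
    ContinuousLinearMap.neg_apply, innerSL_apply_apply, smul_eq_mul, Function.comp_def]
  rw [real_inner_comm y v]
  have hB : (2 * ‖y‖ - 2 * ⟪x₀, y⟫) ≠ 0 := by
    have h : 2 * ‖y‖ - 2 * ⟪x₀, y⟫ = ‖y‖ * (2 - 2 * (⟪x₀, y⟫ * ‖y‖⁻¹)) := by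
      field_simp
    rw [h]; exact mul_ne_zero hn hA
  field_simp
  ring

lemma fderiv_P_eq (x₀ x v : F) (hx : ‖x‖ = 1) (hA2 : (2:ℝ) - 2 * ⟪x₀, x⟫ ≠ 0) :
    fderiv ℝ (fun y : F =>
        (⟪x₀, v⟫ * ‖y‖⁻¹ - ⟪x₀, y⟫ * ⟪v, y⟫ * ‖y‖⁻¹ ^ 3) / (2 - 2 * (⟪x₀, y⟫ * ‖y‖⁻¹))) x v
      = 2 * (⟪x₀, v⟫ - ⟪x₀, x⟫ * ⟪v, x⟫) ^ 2 / (2 - 2 * ⟪x₀, x⟫) ^ 2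
        + (-2 * ⟪x₀, v⟫ * ⟪v, x⟫ + 3 * ⟪x₀, x⟫ * ⟪v, x⟫ ^ 2 - ⟪x₀, x⟫ * ⟪v, v⟫)
            / (2 - 2 * ⟪x₀, x⟫) := by
  have hx0 : x ≠ 0 := by intro h; rw [h] at hx; simp at hx
  have hn : ‖x‖ ≠ 0 := norm_ne_zero_iff.2 hx0
  have hA : 2 - 2 * (⟪x₀, x⟫ * ‖x‖⁻¹) ≠ 0 := by rw [hx]; simpa using hA2
  have hinv := aux_hasFDerivAt_invnorm x hx0
  have hinv3 := (hasDerivAt_pow 3 (‖x‖⁻¹)).comp_hasFDerivAt x hinv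
  simp only [Function.comp_def] at hinv3
  have hnum := (hinv.const_mul ⟪x₀, v⟫).sub
    (((aux_hasFDerivAt_inner x₀ x).mul (aux_hasFDerivAt_inner v x)).mul hinv3)
  have hAinv := (hasDerivAt_inv hA).comp_hasFDerivAt x (aux_hasFDerivAt_A x₀ x hx0)
  simp only [Function.comp_def] at hAinv
  have hP := hnum.mul hAinv
  simp only [div_eq_mul_inv]
  erw [hP.fderiv]
  simp only [ContinuousLinearMap.add_apply, ContinuousLinearMap.smul_apply,
    ContinuousLinearMap.sub_apply, ContinuousLinearMap.neg_apply, innerSL_apply_apply, smul_eq_mul]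
  rw [real_inner_comm x v, hx]
  norm_num
  have h1t : (1:ℝ) - ⟪x₀, x⟫ ≠ 0 := by intro h; apply hA2; linarith
  field_simp
  simp only [hx, real_inner_comm x v]
  ring

lemma second_partial (x₀ x v : F) (hx : ‖x‖ = 1) (hA2 : (2:ℝ) - 2 * ⟪x₀, x⟫ ≠ 0) :
    fderiv ℝ (fderiv ℝ (fun z : F => Real.log (2 - 2 * (⟪x₀, z⟫ * ‖z‖⁻¹)) * (-1/2))) x v v
      = 2 * (⟪x₀, v⟫ - ⟪x₀, x⟫ * ⟪v, x⟫) ^ 2 / (2 - 2 * ⟪x₀, x⟫) ^ 2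
        + (-2 * ⟪x₀, v⟫ * ⟪v, x⟫ + 3 * ⟪x₀, x⟫ * ⟪v, x⟫ ^ 2 - ⟪x₀, x⟫ * ⟪v, v⟫)
            / (2 - 2 * ⟪x₀, x⟫) := by
  set G : F → ℝ := fun z => Real.log (2 - 2 * (⟪x₀, z⟫ * ‖z‖⁻¹)) * (-1/2) with hGdef
  have hx0 : x ≠ 0 := by intro h; rw [h] at hx; simp at hx
  have hn : ‖x‖ ≠ 0 := norm_ne_zero_iff.2 hx0
  have hA : 2 - 2 * (⟪x₀, x⟫ * ‖x‖⁻¹) ≠ 0 := by rw [hx]; simpa using hA2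
  have hc1 : ContDiffAt ℝ 2 (fun z : F => ⟪x₀, z⟫) x := (innerSL ℝ x₀).contDiff.contDiffAt
  have hc2 : ContDiffAt ℝ 2 (fun z : F => ‖z‖⁻¹) x := (contDiffAt_norm ℝ hx0).inv hn
  have hc3 : ContDiffAt ℝ 2 (fun z : F => 2 - 2 * (⟪x₀, z⟫ * ‖z‖⁻¹)) x :=
    contDiffAt_const.sub (contDiffAt_const.mul (hc1.mul hc2))
  have hc4 : ContDiffAt ℝ 2 G x :=
    ((Real.contDiffAt_log.mpr hA).comp x hc3).mul contDiffAt_const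
  have hdiff : DifferentiableAt ℝ (fderiv ℝ G) x :=
    (hc4.fderiv_right (m := 1) (le_refl 2)).differentiableAt one_ne_zero
  have hne0 : ∀ᶠ y in nhds x, y ≠ 0 := IsOpen.eventually_mem isOpen_ne hx0
  have hcA : ContinuousAt (fun y : F => 2 - 2 * (⟪x₀, y⟫ * ‖y‖⁻¹)) x :=
    (aux_hasFDerivAt_A x₀ x hx0).differentiableAt.continuousAt
  have event : (fun y => fderiv ℝ G y v) =ᶠ[nhds x]
      (fun y : F => (⟪x₀, v⟫ * ‖y‖⁻¹ - ⟪x₀, y⟫ * ⟪v, y⟫ * ‖y‖⁻¹ ^ 3)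
        / (2 - 2 * (⟪x₀, y⟫ * ‖y‖⁻¹))) := by
    filter_upwards [hne0, hcA.eventually_ne hA] with y h1 h2
    exact fderiv_G_eq x₀ y h1 h2 v
  have h5 : fderiv ℝ (fun y => fderiv ℝ G y v) x = (fderiv ℝ (fderiv ℝ G) x).flip v := by
    have := fderiv_clm_apply hdiff (differentiableAt_const v)
    simpa using this
  calc fderiv ℝ (fderiv ℝ G) x v v = ((fderiv ℝ (fderiv ℝ G) x).flip v) v := rfl
    _ = fderiv ℝ (fun y => fderiv ℝ G y v) x v := by rw [h5]
    _ = _ := by rw [Filter.EventuallyEq.fderiv_eq event]; exact fderiv_P_eq x₀ x v hx hA2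

end AuxDeriv

/-- **Laplace–Beltrami of the logarithmic kernel.**
For `d > 2` and `x₀ ∈ S^d`, at every `x ∈ S^d` with `x ≠ x₀`,
`-Δ R_0(x,x₀) = (d-2) R_2(x,x₀) - (d-1)/2`. -/

theorem laplacian_of_log_kernel
    (d : ℕ) (hd : 2 < d)
    (x₀ : Amb d) (hx₀ : x₀ ∈ unitSphere d)
    (x : Amb d) (hx : x ∈ unitSphere d) (hne : x ≠ x₀) :
    -sphLaplacian d (fun y => rieszKernel 0 y x₀) x =
      ((d : ℝ) - 2) * rieszKernel 2 x x₀ - ((d : ℝ) - 1) / 2 := by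
  have hxn : ‖x‖ = 1 := by simpa [unitSphere, mem_sphere_zero_iff_norm] using hx
  have hx₀n : ‖x₀‖ = 1 := by simpa [unitSphere, mem_sphere_zero_iff_norm] using hx₀
  have hx0 : x ≠ 0 := by intro h; rw [h] at hxn; simp at hxn
  have hn : ‖x‖ ≠ 0 := norm_ne_zero_iff.2 hx0
  set t : ℝ := ⟪x₀, x⟫ with ht
  have hdist : dist x x₀ ^ 2 = 2 - 2 * t := by
    rw [dist_eq_norm, norm_sub_sq_real, hxn, hx₀n, real_inner_comm x₀ x]; rw [← ht]; ring
  have hApos : (0:ℝ) < 2 - 2 * t := by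
    rw [← hdist]; exact pow_pos (dist_pos.2 hne) 2
  have hA2 : (2:ℝ) - 2 * t ≠ 0 := ne_of_gt hApos
  -- eventual equality with G
  have hproj : sphProj d x = x := by simp [sphProj, hxn]
  have hcont : ContinuousAt (sphProj d) x := by
    exact (continuous_norm.continuousAt.inv₀ hn).smul continuousAt_id
  have hevne : ∀ᶠ y in nhds x, sphProj d y ≠ x₀ :=
    hcont.eventually_ne (by rw [hproj]; exact hne)
  have hev0 : ∀ᶠ y in nhds x, y ≠ 0 := IsOpen.eventually_mem isOpen_ne hx0
  have heq : (fun y => rieszKernel 0 (sphProj d y) x₀) =ᶠ[nhds x]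
      (fun z : Amb d => Real.log (2 - 2 * (⟪x₀, z⟫ * ‖z‖⁻¹)) * (-1/2)) := by
    filter_upwards [hev0, hevne] with y h1 h2
    have hny : ‖y‖ ≠ 0 := norm_ne_zero_iff.2 h1
    have hunit : ‖sphProj d y‖ = 1 := by
      rw [sphProj, norm_smul, norm_inv, norm_norm, inv_mul_cancel₀ hny]
    have hA_eq : dist (sphProj d y) x₀ ^ 2 = 2 - 2 * (⟪x₀, y⟫ * ‖y‖⁻¹) := by
      rw [dist_eq_norm, norm_sub_sq_real, hunit, hx₀n]
      have h3 : ⟪sphProj d y, x₀⟫ = ⟪x₀, y⟫ * ‖y‖⁻¹ := by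
        rw [sphProj, real_inner_smul_left, real_inner_comm]; ring
      rw [h3]; ring
    show rieszKernel 0 (sphProj d y) x₀ = _
    rw [rieszKernel, if_pos rfl, ← hA_eq, Real.log_pow]
    push_cast; ring
  -- the Laplacian as a sum of second partials
  have hL : sphLaplacian d (fun y => rieszKernel 0 y x₀) x =
      ∑ i : Fin (d+1),
        (2 * (x₀ i - t * x i) ^ 2 / (2 - 2*t) ^ 2
          + (-2 * (x₀ i) * (x i) + 3 * t * (x i) ^ 2 - t * 1) / (2 - 2*t)) := by
    rw [sphLaplacian, euclLaplacian]
    refine Finset.sum_congr rfl (fun i _ => ?_)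
    rw [iteratedFDeriv_two_apply]
    simp only [Matrix.cons_val_zero, Matrix.cons_val_one, Matrix.head_cons]
    rw [Filter.EventuallyEq.fderiv_eq (Filter.EventuallyEq.fderiv heq)]
    rw [second_partial x₀ x (EuclideanSpace.single i (1:ℝ)) hxn hA2]
    rw [EuclideanSpace.inner_single_right, EuclideanSpace.inner_single_left,
      EuclideanSpace.inner_single_left]
    simp [EuclideanSpace.single_apply, ← ht]
  -- base sums
  have hxx : ∑ i : Fin (d+1), x i * x i = 1 := by
    have h : ⟪x, x⟫ = 1 := by rw [real_inner_self_eq_norm_sq, hxn]; norm_num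
    rw [← h]; simp only [PiLp.inner_apply, RCLike.inner_apply, conj_trivial, mul_comm]
  have hxx0 : ∑ i : Fin (d+1), x₀ i * x₀ i = 1 := by
    have h : ⟪x₀, x₀⟫ = 1 := by rw [real_inner_self_eq_norm_sq, hx₀n]; norm_num
    rw [← h]; simp only [PiLp.inner_apply, RCLike.inner_apply, conj_trivial, mul_comm]
  have hx0x : ∑ i : Fin (d+1), x₀ i * x i = t := by
    rw [ht]; simp [PiLp.inner_apply, RCLike.inner_apply, conj_trivial, mul_comm]
  have expand : ∀ i : Fin (d+1),
      2 * (x₀ i - t * x i) ^ 2 / (2 - 2*t) ^ 2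
        + (-2 * (x₀ i) * (x i) + 3 * t * (x i) ^ 2 - t * 1) / (2 - 2*t)
      = (2 / (2-2*t)^2) * (x₀ i * x₀ i)
        + (2*t^2/(2-2*t)^2 + 3*t/(2-2*t)) * (x i * x i)
        + (-4*t/(2-2*t)^2 - 2/(2-2*t)) * (x₀ i * x i)
        + (-(t/(2-2*t))) := by
    intro i; field_simp; ring
  rw [hL, Finset.sum_congr rfl (fun i _ => expand i)]
  simp only [Finset.sum_add_distrib, ← Finset.mul_sum, hxx, hxx0, hx0x, Finset.sum_const,
    Finset.card_univ, Fintype.card_fin, nsmul_eq_mul, mul_one]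
  have hr2 : rieszKernel 2 x x₀ = (2 - 2*t)⁻¹ := by
    rw [rieszKernel, if_neg two_ne_zero, Real.rpow_neg dist_nonneg, Real.rpow_two, hdist]
  rw [hr2]
  push_cast
  have h1t : (1:ℝ) - t ≠ 0 := by intro h; apply hA2; linarith
  field_simp
  ring
end
end
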